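/- arXiv:math/0609165 — 5 statements merged into one kernel-verified Lean document; each statement's English description precedes it below -/
import Mathlib

section
/- Let 0 < σ ≤ 1 and 0 < λ < 1, and set ε := 1 - λ. If ε is sufficiently small, then ∑_{n=1}^∞ λ^n / n^σ ≤ 3 · ε^(-1/(1+σ)). -/
/-!
Hölder's inequality with the conjugate exponents `p = (1 + σ) / σ` and `q = 1 + σ` bounds the sum
by `(∑ (n + 1) ^ (-q)) ^ (1 / p) * (∑ λ ^ (q (n + 1))) ^ (1 / q)`. Telescoping against
`n ^ (-σ) / σ` gives `∑ (n + 1) ^ (-q) ≤ q / σ = p`, and comparison with `∑ λ ^ n` gives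
`∑ λ ^ (q (n + 1)) ≤ (1 - λ)⁻¹`. Finally `p ^ (1 / p) ≤ 3` because `p ≤ exp p ≤ 3 ^ p`.
The estimate holds for every `λ ∈ (0, 1)`, so any threshold `ε₀` works.
-/

open Real Finset

lemma mul_add_one_rpow_neg_le_rpow_neg_sub {t a : ℝ} (ht : 0 < t) (ha : 0 < a) :
    t * (a + 1) ^ (-(t + 1)) ≤ a ^ (-t) - (a + 1) ^ (-t) := by
  have hb : 0 < a + 1 := by linarith
  have bernoulli : 1 + (t + 1) * a⁻¹ ≤ (1 + a⁻¹) ^ (t + 1) :=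
    one_add_mul_self_le_rpow_one_add (by linarith [inv_pos.2 ha]) (by linarith)
  have hx : 1 + a⁻¹ = (a + 1) / a := by field_simp
  rw [hx, rpow_add (by positivity), rpow_one, div_rpow hb.le ha.le] at bernoulli
  rw [rpow_neg hb.le, rpow_neg ha.le, rpow_neg hb.le, rpow_add hb, rpow_one]
  have hA := rpow_pos_of_pos ha t
  have hB := rpow_pos_of_pos hb t
  rw [← sub_nonneg] at bernoulli ⊢
  field_simp at bernoulli ⊢
  nlinarith

lemma sum_range_add_one_rpow_neg_le {s : ℝ} (hs : 1 < s) (n : ℕ) :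
    ∑ i ∈ range n, ((i : ℝ) + 1) ^ (-s) ≤ s / (s - 1) := by
  obtain ⟨t, ht, rfl⟩ : ∃ t, 0 < t ∧ s = t + 1 := ⟨s - 1, by linarith, by ring⟩
  rcases n with _ | m
  · simp only [range_zero, sum_empty]; positivity
  have tail : ∑ i ∈ range m, ((i : ℝ) + 1 + 1) ^ (-(t + 1)) ≤ 1 / t := by
    calc ∑ i ∈ range m, ((i : ℝ) + 1 + 1) ^ (-(t + 1))
        ≤ ∑ i ∈ range m, (((i : ℝ) + 1) ^ (-t) - ((i + 1 : ℕ) + 1 : ℝ) ^ (-t)) / t := by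
          refine sum_le_sum fun i _ => (le_div_iff₀' ht).2 ?_
          push_cast
          exact mul_add_one_rpow_neg_le_rpow_neg_sub ht (by positivity)
      _ = (1 - ((m : ℝ) + 1) ^ (-t)) / t := by
          rw [← sum_div, sum_range_sub' (fun i : ℕ => ((i : ℝ) + 1) ^ (-t))]
          simp
      _ ≤ 1 / t := by gcongr; linarith [rpow_nonneg (by positivity : (0 : ℝ) ≤ m + 1) (-t)]
  rw [sum_range_succ']
  push_cast
  calc _ ≤ 1 / t + 1 := by simpa using tail
    _ = (t + 1) / (t + 1 - 1) := by rw [add_sub_cancel_right]; field_simp; ring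

lemma summable_add_one_rpow_neg {s : ℝ} (hs : 1 < s) :
    Summable fun n : ℕ => ((n : ℝ) + 1) ^ (-s) := by
  have := (summable_nat_add_iff 1).2 (Real.summable_nat_rpow.2 (by linarith : -s < -1))
  simpa using this

lemma summable_and_tsum_rpow_pow_succ_le {lam q : ℝ} (h0 : 0 ≤ lam) (h1 : lam < 1) (hq : 1 ≤ q) :
    Summable (fun n : ℕ => (lam ^ (n + 1)) ^ q) ∧
      ∑' n : ℕ, (lam ^ (n + 1)) ^ q ≤ (1 - lam)⁻¹ := by
  have le_geom (n : ℕ) : (lam ^ (n + 1)) ^ q ≤ lam ^ n :=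
    calc (lam ^ (n + 1)) ^ q ≤ lam ^ (n + 1) :=
          rpow_le_self_of_le_one (by positivity) (pow_le_one₀ h0 h1.le) hq
      _ ≤ lam ^ n := pow_le_pow_of_le_one h0 h1.le n.le_succ
  have geom := summable_geometric_of_lt_one h0 h1
  have nonneg (n : ℕ) : 0 ≤ (lam ^ (n + 1)) ^ q := by positivity
  have summable := geom.of_nonneg_of_le nonneg le_geom
  exact ⟨summable, (summable.tsum_le_tsum le_geom geom).trans (tsum_geometric_of_lt_one h0 h1).le⟩

lemma rpow_one_div_self_le_three {x : ℝ} (hx : 0 < x) : x ^ (1 / x) ≤ 3 := by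
  have le_three_rpow : x ≤ 3 ^ x :=
    calc x ≤ x + 1 := by linarith
      _ ≤ exp x := add_one_le_exp x
      _ = exp 1 ^ x := (exp_one_rpow x).symm
      _ ≤ 3 ^ x := by gcongr; exact exp_one_lt_d9.le.trans (by norm_num)
  calc x ^ (1 / x) ≤ (3 ^ x) ^ (1 / x) := by gcongr
    _ = 3 := by rw [← rpow_mul (by norm_num), mul_one_div_cancel hx.ne', rpow_one]

lemma tsum_pow_succ_div_rpow_le {σ lam : ℝ} (hσ : 0 < σ) (h0 : 0 ≤ lam) (h1 : lam < 1) :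
    ∑' n : ℕ, lam ^ (n + 1) / ((n : ℝ) + 1) ^ σ ≤
      ((1 + σ) / σ) ^ (σ / (1 + σ)) * (1 - lam) ^ (-(1 / (1 + σ))) := by
  set q := 1 + σ
  set p := q / σ
  have hpq : p.HolderConjugate q := by
    refine Real.holderConjugate_iff.2 ⟨?_, ?_⟩
    · rw [lt_div_iff₀ hσ]; linarith
    · simp only [p, q]; field_simp; ring
  have hn (n : ℕ) : (0 : ℝ) < n + 1 := by positivity
  have hf (n : ℕ) : 0 ≤ ((n : ℝ) + 1) ^ (-σ) := by positivity
  have hg (n : ℕ) : 0 ≤ lam ^ (n + 1) := by positivity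
  have hfp (n : ℕ) : (((n : ℝ) + 1) ^ (-σ)) ^ p = ((n : ℝ) + 1) ^ (-q) := by
    rw [← rpow_mul (hn n).le]; congr 1; simp only [p]; field_simp
  obtain ⟨hg_sum, hg_le⟩ := summable_and_tsum_rpow_pow_succ_le h0 h1 (by linarith : 1 ≤ q)
  have hf_sum : Summable fun n : ℕ => (((n : ℝ) + 1) ^ (-σ)) ^ p := by
    simpa only [hfp] using summable_add_one_rpow_neg (by linarith : 1 < q)
  have hf_le : ∑' n : ℕ, (((n : ℝ) + 1) ^ (-σ)) ^ p ≤ p := by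
    simp only [hfp]
    refine Real.tsum_le_of_sum_range_le (fun n => by positivity) fun n => ?_
    have := sum_range_add_one_rpow_neg_le (by linarith : 1 < q) n
    rwa [show q - 1 = σ by simp only [q]; ring] at this
  calc ∑' n : ℕ, lam ^ (n + 1) / ((n : ℝ) + 1) ^ σ
      = ∑' n : ℕ, ((n : ℝ) + 1) ^ (-σ) * lam ^ (n + 1) := by
        congr 1; ext n; rw [rpow_neg (hn n).le, div_eq_inv_mul]
    _ ≤ (∑' n : ℕ, (((n : ℝ) + 1) ^ (-σ)) ^ p) ^ (1 / p) *
          (∑' n : ℕ, (lam ^ (n + 1)) ^ q) ^ (1 / q) :=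
        inner_le_Lp_mul_Lq_tsum_of_nonneg hpq hf hg hf_sum hg_sum
    _ ≤ p ^ (1 / p) * ((1 - lam)⁻¹) ^ (1 / q) := by gcongr
    _ = p ^ (σ / q) * (1 - lam) ^ (-(1 / q)) := by
        rw [inv_rpow (by linarith), rpow_neg (by linarith), one_div_div]

theorem polylog_real_bound :
    ∃ ε₀ > (0 : ℝ), ∀ σ lam : ℝ, 0 < σ → σ ≤ 1 → 0 < lam → lam < 1 →
      1 - lam < ε₀ →
      ∑' n : ℕ, lam ^ (n + 1) / ((n : ℝ) + 1) ^ σ ≤ 3 * (1 - lam) ^ (-(1 / (1 + σ))) := by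
  refine ⟨1, one_pos, fun σ lam hσ _ h0 h1 _ => ?_⟩
  have holder_constant_le : ((1 + σ) / σ) ^ (σ / (1 + σ)) ≤ 3 := by
    simpa only [one_div_div] using rpow_one_div_self_le_three (x := (1 + σ) / σ) (by positivity)
  calc ∑' n : ℕ, lam ^ (n + 1) / ((n : ℝ) + 1) ^ σ
      ≤ ((1 + σ) / σ) ^ (σ / (1 + σ)) * (1 - lam) ^ (-(1 / (1 + σ))) :=
        tsum_pow_succ_div_rpow_le hσ h0.le h1
    _ ≤ 3 * (1 - lam) ^ (-(1 / (1 + σ))) := by gcongr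
end

section
/- Fix α ∈ [0, π/2), R > 0, and let R' := R/cos α. The set Π(R) := {z ∈ ℂ : Re(z - R') ≥ |z - R'| sin α} equals the complement of { e^{iθ} z : Re z < R, |θ| ≤ α }. -/
/-!
Write `s = sin α`, `c = cos α`. Since `s² + c² = 1` and `c > 0`, the sector condition
`‖u‖ s ≤ Re u` at `u = z - R'` is the pair of half-plane conditions `c Re u ± s Im u ≥ 0`,
i.e. `R ≤ c Re z - s |Im z|` because `R' c = R`. On the other hand `z` avoids every rotated
half-plane iff `R ≤ Re (e^{-iθ} z) = cos θ Re z + sin θ Im z` for all `|θ| ≤ α`. The extreme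
angles `θ = ±α` give one direction; for the other, `Re z > 0` and `cos θ ≥ c`, `|sin θ| ≤ s`.
-/

open Real Complex

lemma Complex.re_exp_neg_mul_I_mul (θ : ℝ) (w : ℂ) :
    (exp (-(θ * I)) * w).re = Real.cos θ * w.re + Real.sin θ * w.im := by
  rw [← neg_mul, ← ofReal_neg, exp_mul_I, mul_re]
  simp [← ofReal_cos, ← ofReal_sin]

lemma Complex.norm_mul_sin_le_re_iff {α : ℝ} (hs : 0 ≤ Real.sin α) (hc : 0 < Real.cos α)
    (u : ℂ) : ‖u‖ * Real.sin α ≤ u.re ↔ Real.sin α * |u.im| ≤ Real.cos α * u.re := by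
  by_cases hre : 0 ≤ u.re
  · have hnorm : ‖u‖ ^ 2 = u.re ^ 2 + |u.im| ^ 2 := by
      rw [Complex.sq_norm, normSq_apply, sq_abs]; ring
    have hc2 : Real.cos α ^ 2 = 1 - Real.sin α ^ 2 := by linarith [Real.sin_sq_add_cos_sq α]
    rw [← sq_le_sq₀ (by positivity) hre,
      ← sq_le_sq₀ (by positivity) (by positivity : 0 ≤ Real.cos α * u.re),
      mul_pow, mul_pow, mul_pow, hnorm, hc2]
    constructor <;> intro h <;> linarith
  · refine iff_of_false (fun h => hre ((by positivity : 0 ≤ ‖u‖ * Real.sin α).trans h))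
      (fun h => hre (nonneg_of_mul_nonneg_right ((by positivity : (0 : ℝ) ≤ _).trans h) hc))

lemma Complex.exists_eq_exp_mul_I_mul_iff (p : ℝ → Prop) (q : ℂ → Prop) (w : ℂ) :
    (∃ θ : ℝ, ∃ z : ℂ, p θ ∧ q z ∧ w = exp (θ * I) * z) ↔
      ∃ θ : ℝ, p θ ∧ q (exp (-(θ * I)) * w) := by
  constructor
  · rintro ⟨θ, z, hθ, hz, rfl⟩
    refine ⟨θ, hθ, ?_⟩
    rwa [← mul_assoc, ← exp_add, neg_add_cancel, exp_zero, one_mul]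
  · rintro ⟨θ, hθ, hq⟩
    exact ⟨θ, _, hθ, hq, by rw [← mul_assoc, ← exp_add, add_neg_cancel, exp_zero, one_mul]⟩

lemma Real.forall_abs_le_le_cos_mul_add_sin_mul_iff {α R x y : ℝ} (hα0 : 0 ≤ α)
    (hα : α ≤ π / 2) (hR : 0 < R) :
    (∀ θ, |θ| ≤ α → R ≤ Real.cos θ * x + Real.sin θ * y) ↔
      R ≤ Real.cos α * x - Real.sin α * |y| := by
  constructor
  · intro h
    rcases le_total 0 y with hy | hy
    · have := h (-α) (by rw [abs_neg, abs_of_nonneg hα0])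
      rw [Real.cos_neg, Real.sin_neg] at this
      rw [abs_of_nonneg hy]; linarith
    · have := h α (by rw [abs_of_nonneg hα0])
      rw [abs_of_nonpos hy]; linarith
  · intro h θ hθ
    have hx : 0 < x := pos_of_mul_pos_right
      (by nlinarith [abs_nonneg y, Real.sin_nonneg_of_nonneg_of_le_pi hα0 (by linarith [pi_pos])])
      (Real.cos_nonneg_of_neg_pi_div_two_le_of_le (by linarith [pi_pos]) hα)
    have hcos : Real.cos α ≤ Real.cos θ := Real.cos_abs θ ▸
      Real.cos_le_cos_of_nonneg_of_le_pi (abs_nonneg θ) (by linarith [pi_pos]) hθ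
    have hsin : |Real.sin θ| ≤ Real.sin α := by
      rw [abs_sin_eq_sin_abs_of_abs_le_pi (by linarith [pi_pos])]
      exact Real.sin_le_sin_of_le_of_le_pi_div_two (by linarith [abs_nonneg θ]) hα hθ
    calc R ≤ Real.cos α * x - Real.sin α * |y| := h
      _ ≤ Real.cos θ * x - |Real.sin θ| * |y| := by gcongr
      _ ≤ Real.cos θ * x + Real.sin θ * y := by
        linarith [abs_mul (Real.sin θ) y ▸ neg_abs_le (Real.sin θ * y)]

theorem sector_eq_complement (α : ℝ) (hα0 : 0 ≤ α) (hα : α < Real.pi / 2)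
    (R : ℝ) (hR : 0 < R) (R' : ℝ) (hR' : R' = R / Real.cos α) :
    {z : ℂ | ‖z - R'‖ * Real.sin α ≤ (z - (R' : ℂ)).re} =
      {w : ℂ | ∃ θ : ℝ, ∃ z : ℂ, |θ| ≤ α ∧ z.re < R ∧ w = Complex.exp (θ * Complex.I) * z}ᶜ := by
  have hc : 0 < Real.cos α := Real.cos_pos_of_mem_Ioo ⟨by linarith [pi_pos], hα⟩
  have hs : 0 ≤ Real.sin α := Real.sin_nonneg_of_nonneg_of_le_pi hα0 (by linarith [pi_pos])
  have hRc : Real.cos α * R' = R := by rw [hR']; field_simp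
  ext w
  rw [Set.mem_ofPred_eq, norm_mul_sin_le_re_iff hs hc, Set.mem_compl_iff, Set.mem_ofPred_eq,
    exists_eq_exp_mul_I_mul_iff (|·| ≤ α) (·.re < R)]
  simp only [not_exists, not_and, not_lt, re_exp_neg_mul_I_mul]
  rw [forall_abs_le_le_cos_mul_add_sin_mul_iff hα0 hα.le hR, sub_re, sub_im, ofReal_re,
    ofReal_im, sub_zero, mul_sub, hRc]
  exact le_sub_comm
end

section
/- Fix α ∈ [0, π/2), R > 0, R' := R/cos α, and let τ be complex with |τ| ≥ 1, τ ≠ 1, |arg(τ-1)| ≤ α. Let b := 1/(1-τ) and N(z) := |z-b| - |b|. Then the sector Π(R) := {z : Re(z - R') ≥ |z - R'| sin α} is contained in V(R) := {z : N(z) ≥ R}. -/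
/-! Put `θ := arg (τ - 1)` and `v := exp (θ i)`. Since `-b = (τ - 1)⁻¹` points in the direction
of `conj v`, projecting onto `v` gives `Re (z v) ≤ ‖z - b‖ - ‖b‖`. Writing `z = R' + w`, the sector
condition puts `w` in the cone of half-angle `π/2 - α` around `ℝ₊`, while `v` lies in the cone of
half-angle `α`; the product of two such cones lies in the right half-plane, so
`Re (z v) ≥ R' Re v ≥ R' cos α = R`. -/

open Complex

namespace Complex

theorem abs_im_le_norm_mul_sin {w : ℂ} {β : ℝ} (hcos : 0 ≤ Real.cos β) (hsin : 0 ≤ Real.sin β)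
    (hw : ‖w‖ * Real.cos β ≤ w.re) : |w.im| ≤ ‖w‖ * Real.sin β := by
  have hre_sq : (‖w‖ * Real.cos β) ^ 2 ≤ w.re ^ 2 :=
    pow_le_pow_left₀ (by positivity) hw 2
  have hnorm_sq : ‖w‖ ^ 2 = w.re ^ 2 + w.im ^ 2 := by
    rw [Complex.sq_norm, normSq_apply]; ring
  apply abs_le_of_sq_le_sq _ (by positivity)
  nlinarith [Real.sin_sq_add_cos_sq β]

theorem re_mul_nonneg_of_cones {w v : ℂ} {α : ℝ} (hcos : 0 ≤ Real.cos α)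
    (hsin : 0 ≤ Real.sin α) (hw : ‖w‖ * Real.sin α ≤ w.re) (hv : ‖v‖ * Real.cos α ≤ v.re) :
    0 ≤ (w * v).re := by
  have hw_im : |w.im| ≤ ‖w‖ * Real.cos α := by
    rw [← Real.sin_pi_div_two_sub] at hcos ⊢
    rw [← Real.cos_pi_div_two_sub] at hsin hw
    exact abs_im_le_norm_mul_sin hsin hcos hw
  have hv_im : |v.im| ≤ ‖v‖ * Real.sin α := abs_im_le_norm_mul_sin hcos hsin hv
  have hre : (‖w‖ * Real.sin α) * (‖v‖ * Real.cos α) ≤ w.re * v.re :=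
    mul_le_mul hw hv (by positivity) ((by positivity : (0 : ℝ) ≤ _).trans hw)
  have him : w.im * v.im ≤ (‖w‖ * Real.cos α) * (‖v‖ * Real.sin α) :=
    calc w.im * v.im ≤ |w.im| * |v.im| := (le_abs_self _).trans (abs_mul _ _).le
      _ ≤ _ := mul_le_mul hw_im hv_im (abs_nonneg _) (by positivity)
  rw [mul_re]
  linarith

theorem re_mul_le_norm_sub_sub_norm {z b v : ℂ} (hv : ‖v‖ = 1) (hbv : -b * v = ‖b‖) :
    (z * v).re ≤ ‖z - b‖ - ‖b‖ := by
  have hsplit : (z - b) * v = z * v + ‖b‖ := by rw [← hbv]; ring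
  have := re_le_norm ((z - b) * v)
  rw [norm_mul, hv, mul_one, hsplit, add_re, ofReal_re] at this
  linarith

theorem le_re_mul_of_mem_sector {z v : ℂ} {α r : ℝ} (hcos : 0 ≤ Real.cos α)
    (hsin : 0 ≤ Real.sin α) (hr : 0 ≤ r) (hz : ‖z - r‖ * Real.sin α ≤ (z - r).re)
    (hv : ‖v‖ * Real.cos α ≤ v.re) : r * (‖v‖ * Real.cos α) ≤ (z * v).re := by
  have hsplit : (z * v).re = ((z - r) * v).re + r * v.re := by
    rw [← re_ofReal_mul, ← add_re]; ring_nf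
  have hzr := re_mul_nonneg_of_cones hcos hsin hz hv
  have hrv := mul_le_mul_of_nonneg_left hv hr
  linarith

theorem inv_mul_exp_arg_mul_I (c : ℂ) : c⁻¹ * exp (arg c * I) = ‖c⁻¹‖ := by
  calc c⁻¹ * exp (arg c * I) = (‖c‖ * exp (arg c * I))⁻¹ * exp (arg c * I) := by
        rw [norm_mul_exp_arg_mul_I]
    _ = ‖c⁻¹‖ := by
        rw [mul_inv, mul_assoc, inv_mul_cancel₀ (exp_ne_zero _), mul_one, norm_inv, ofReal_inv]

end Complex

theorem sector_subset_V_general (α : ℝ) (hα : α < Real.pi / 2)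
    (R : ℝ) (hR : 0 < R) (R' : ℝ) (hR' : R' = R / Real.cos α)
    (τ : ℂ)
    (harg : |Complex.arg (τ - 1)| ≤ α)
    (b : ℂ) (hb : b = 1 / (1 - τ))
    (N : ℂ → ℝ) (hN : ∀ z, N z = ‖z - b‖ - ‖b‖) :
    {z : ℂ | ‖(z - R' : ℂ)‖ * Real.sin α ≤ (z - (R' : ℂ)).re} ⊆ {z : ℂ | R ≤ N z} := by
  intro z hz
  set v := exp (arg (τ - 1) * I)
  have hα0 : 0 ≤ α := (abs_nonneg _).trans harg
  have hcos : 0 < Real.cos α := Real.cos_pos_of_mem_Ioo ⟨by linarith [Real.pi_pos], hα⟩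
  have hsin : 0 ≤ Real.sin α := Real.sin_nonneg_of_nonneg_of_le_pi hα0 (by linarith [Real.pi_pos])
  have hv_norm : ‖v‖ = 1 := norm_exp_ofReal_mul_I _
  have hv : ‖v‖ * Real.cos α ≤ v.re := by
    rw [hv_norm, one_mul, exp_ofReal_mul_I_re, ← Real.cos_abs (arg _)]
    exact Real.cos_le_cos_of_nonneg_of_le_pi (abs_nonneg _) (by linarith [Real.pi_pos]) harg
  have hbv : -b * v = ‖b‖ := by
    rw [hb, one_div, ← neg_sub τ 1, inv_neg, neg_neg, norm_neg]
    exact inv_mul_exp_arg_mul_I _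
  have hR'_nonneg : 0 ≤ R' := hR' ▸ div_nonneg hR.le hcos.le
  calc R = R' * (‖v‖ * Real.cos α) := by rw [hv_norm, one_mul, hR', div_mul_cancel₀ _ hcos.ne']
    _ ≤ (z * v).re := le_re_mul_of_mem_sector hcos.le hsin hR'_nonneg hz hv
    _ ≤ N z := hN z ▸ re_mul_le_norm_sub_sub_norm hv_norm hbv

theorem sector_subset_V (α : ℝ) (hα0 : 0 ≤ α) (hα : α < Real.pi / 2)
    (R : ℝ) (hR : 0 < R) (R' : ℝ) (hR' : R' = R / Real.cos α)
    (τ : ℂ) (hτ : 1 ≤ ‖τ‖) (hτ1 : τ ≠ 1)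
    (harg : |Complex.arg (τ - 1)| ≤ α)
    (b : ℂ) (hb : b = 1 / (1 - τ))
    (N : ℂ → ℝ) (hN : ∀ z, N z = ‖z - b‖ - ‖b‖) :
    {z : ℂ | ‖(z - R' : ℂ)‖ * Real.sin α ≤ (z - (R' : ℂ)).re} ⊆ {z : ℂ | R ≤ N z} :=
  sector_subset_V_general α hα R hR R' hR' τ harg b hb N hN
end

section
/- Let S > 0 and let g be holomorphic on {|z| > S} with |g'(z)| ≤ K for all |z| ≥ 2S. Then for any z₁, z₂ with |z₁|, |z₂| ≥ 2S, |g(z₂) - g(z₁)| ≤ (π/2)·K·|z₂ - z₁|. -/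
/-!
Join `z₁` to `z₂` by a semicircle with diameter `[z₁, z₂]`: it has length `π/2 · |z₂ - z₁|`, so
integrating `g'` along it gives the bound as soon as the arc stays in `{|z| ≥ 2S}`.
On the arc `θ ↦ (z₁ + z₂)/2 + (z₁ - z₂)/2 · e^{iθ}`, `|z|²` is the convex combination
`(1 + cos θ)/2 · |z₁|² + (1 - cos θ)/2 · |z₂|²`
plus a multiple of `sin θ` whose sign is reversed on the opposite semicircle; on one of the two it
is nonnegative, and there `|z| ≥ min (|z₁|, |z₂|) ≥ 2S`.
-/

open Complex ComplexConjugate Real Set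

theorem norm_image_sub_le_of_path {E : Type*} [NormedAddCommGroup E] [NormedSpace ℂ E]
    {g : ℂ → E} {γ γ' : ℝ → ℂ} {a b K L : ℝ} (hab : a ≤ b)
    (hγ : ∀ t ∈ Icc a b, HasDerivAt γ (γ' t) t)
    (hg : ∀ t ∈ Icc a b, DifferentiableAt ℂ g (γ t))
    (hg' : ∀ t ∈ Icc a b, ‖deriv g (γ t)‖ ≤ K) (hγ' : ∀ t ∈ Icc a b, ‖γ' t‖ ≤ L) :
    ‖g (γ b) - g (γ a)‖ ≤ K * L * (b - a) := by
  have key := (convex_Icc a b).norm_image_sub_le_of_norm_hasDerivWithin_le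
    (f := g ∘ γ) (C := K * L)
    (fun t ht => ((hg t ht).hasDerivAt.scomp t (hγ t ht)).hasDerivWithinAt)
    (fun t ht => by
      rw [norm_smul, mul_comm]
      exact mul_le_mul (hg' t ht) (hγ' t ht) (norm_nonneg _) ((norm_nonneg _).trans (hg' t ht)))
    (left_mem_Icc.2 hab) (right_mem_Icc.2 hab)
  rwa [Real.norm_of_nonneg (sub_nonneg.2 hab)] at key

/-- On `[0, π]`, the half of the circle with diameter `[z₁, z₂]` run counterclockwise from `z₁` to
`z₂`; `semicircle z₂ z₁` runs over the other half. -/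
noncomputable def semicircle (z₁ z₂ : ℂ) (θ : ℝ) : ℂ := (z₁ + z₂) / 2 + (z₁ - z₂) / 2 * exp (θ * I)

namespace semicircle

variable (z₁ z₂ : ℂ)

@[simp] theorem apply_zero : semicircle z₁ z₂ 0 = z₁ := by
  simp [semicircle]; ring

@[simp] theorem apply_pi : semicircle z₁ z₂ π = z₂ := by
  simp [semicircle, exp_pi_mul_I]; ring

theorem hasDerivAt (θ : ℝ) :
    HasDerivAt (semicircle z₁ z₂) ((z₁ - z₂) / 2 * exp (θ * I) * I) θ := by
  have := ((hasDerivAt_id (θ : ℂ)).mul_const I).cexp.const_mul ((z₁ - z₂) / 2)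
    |>.comp_ofReal.const_add ((z₁ + z₂) / 2)
  unfold semicircle
  simpa [mul_assoc] using this

theorem norm_deriv (θ : ℝ) : ‖(z₁ - z₂) / 2 * exp (θ * I) * I‖ = ‖z₂ - z₁‖ / 2 := by
  rw [norm_mul, norm_mul, norm_exp_ofReal_mul_I, norm_I, norm_div, norm_sub_rev, RCLike.norm_two]
  ring

theorem normSq_apply (θ : ℝ) :
    normSq (semicircle z₁ z₂ θ) = (normSq z₁ + normSq z₂) / 2
      + (normSq z₁ - normSq z₂) / 2 * Real.cos θ - (z₁ * conj z₂).im * Real.sin θ := by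
  rw [semicircle, exp_mul_I, ← ofReal_cos, ← ofReal_sin]
  simp only [Complex.normSq_apply, mul_re, mul_im, add_re, add_im, sub_re, sub_im,
    div_ofNat_re, div_ofNat_im, ofReal_re, ofReal_im, I_re, I_im, conj_re, conj_im]
  linear_combination ((z₁.re - z₂.re) ^ 2 + (z₁.im - z₂.im) ^ 2) / 4 * Real.sin_sq_add_cos_sq θ

theorem min_norm_le_norm_apply (h : (z₁ * conj z₂).im ≤ 0) {θ : ℝ} (hθ : θ ∈ Icc 0 π) :
    min ‖z₁‖ ‖z₂‖ ≤ ‖semicircle z₁ z₂ θ‖ := by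
  set m := min ‖z₁‖ ‖z₂‖
  have hm : 0 ≤ m := le_min (norm_nonneg _) (norm_nonneg _)
  have h₁ : m ^ 2 ≤ normSq z₁ := by rw [← Complex.sq_norm]; gcongr; exact min_le_left _ _
  have h₂ : m ^ 2 ≤ normSq z₂ := by rw [← Complex.sq_norm]; gcongr; exact min_le_right _ _
  have hsin := sin_nonneg_of_mem_Icc hθ
  refine (pow_le_pow_iff_left₀ hm (norm_nonneg _) two_ne_zero).1 ?_
  rw [Complex.sq_norm, normSq_apply]
  nlinarith [mul_nonneg (neg_nonneg.2 h) hsin, neg_one_le_cos θ, cos_le_one θ,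
    mul_nonneg (sub_nonneg.2 h₁) (by linarith [neg_one_le_cos θ] : 0 ≤ 1 + Real.cos θ),
    mul_nonneg (sub_nonneg.2 h₂) (by linarith [cos_le_one θ] : 0 ≤ 1 - Real.cos θ)]

theorem forall_min_norm_le_or (z₁ z₂ : ℂ) :
    (∀ θ ∈ Icc 0 π, min ‖z₁‖ ‖z₂‖ ≤ ‖semicircle z₁ z₂ θ‖) ∨
      ∀ θ ∈ Icc 0 π, min ‖z₁‖ ‖z₂‖ ≤ ‖semicircle z₂ z₁ θ‖ := by
  rcases le_total (z₁ * conj z₂).im 0 with h | h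
  · exact Or.inl fun θ hθ => min_norm_le_norm_apply z₁ z₂ h hθ
  · refine Or.inr fun θ hθ => min_comm ‖z₁‖ ‖z₂‖ ▸ min_norm_le_norm_apply z₂ z₁ ?_ hθ
    have : (z₂ * conj z₁).im = -(z₁ * conj z₂).im := by simp only [mul_im, conj_re, conj_im]; ring
    linarith

end semicircle

theorem norm_image_sub_le_of_semicircle {E : Type*} [NormedAddCommGroup E] [NormedSpace ℂ E]
    {g : ℂ → E} {z₁ z₂ : ℂ} {K : ℝ}
    (hg : ∀ θ ∈ Icc 0 π, DifferentiableAt ℂ g (semicircle z₁ z₂ θ))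
    (hK : ∀ θ ∈ Icc 0 π, ‖deriv g (semicircle z₁ z₂ θ)‖ ≤ K) :
    ‖g z₂ - g z₁‖ ≤ π / 2 * K * ‖z₂ - z₁‖ := by
  have := norm_image_sub_le_of_path pi_nonneg (fun θ _ => semicircle.hasDerivAt z₁ z₂ θ) hg hK
    (fun θ _ => (semicircle.norm_deriv z₁ z₂ θ).le)
  rw [semicircle.apply_zero, semicircle.apply_pi] at this
  linarith

theorem increment_estimate (S K : ℝ) (hS : 0 < S) (g : ℂ → ℂ)
    (hg : DifferentiableOn ℂ g {z : ℂ | S < ‖z‖})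
    (hbd : ∀ z : ℂ, 2 * S ≤ ‖z‖ → ‖deriv g z‖ ≤ K) :
    ∀ z₁ z₂ : ℂ, 2 * S ≤ ‖z₁‖ → 2 * S ≤ ‖z₂‖ →
      ‖g z₂ - g z₁‖ ≤ Real.pi / 2 * K * ‖z₂ - z₁‖ := by
  intro z₁ z₂ h₁ h₂
  have hU : IsOpen {z : ℂ | S < ‖z‖} := isOpen_lt continuous_const continuous_norm
  have along {w₁ w₂ : ℂ} (hw : ∀ θ ∈ Icc 0 π, min ‖z₁‖ ‖z₂‖ ≤ ‖semicircle w₁ w₂ θ‖) :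
      ‖g w₂ - g w₁‖ ≤ π / 2 * K * ‖w₂ - w₁‖ := by
    have hfar θ (hθ : θ ∈ Icc 0 π) : 2 * S ≤ ‖semicircle w₁ w₂ θ‖ := (le_min h₁ h₂).trans (hw θ hθ)
    refine norm_image_sub_le_of_semicircle (fun θ hθ => hg.differentiableAt (hU.mem_nhds ?_))
      fun θ hθ => hbd _ (hfar θ hθ)
    exact (show S < 2 * S by linarith).trans_le (hfar θ hθ)
  rcases semicircle.forall_min_norm_le_or z₁ z₂ with h | h
  · exact along h
  · rw [norm_sub_rev, norm_sub_rev z₂]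
    exact along h
end

section
/- Let S > R > 0, σ ∈ (0,1], M > 0, τ ∈ ℂ, and let f be holomorphic on {|z| > R} with |f(z) - (τz + 1)| ≤ M/|z|^σ for all |z| > R. Then for all z₁ ≠ z₂ with |z₁|, |z₂| ≥ 2S, |(f(z₂) - f(z₁))/(z₂ - z₁) - τ| ≤ (πM/2)/S^(1+σ). -/
/-!
Put `g z := f z - (τ z + 1)`, so `‖g‖ ≤ M / S ^ σ` on `{S ≤ ‖z‖}`. For `z₁, z₂` far apart
(`‖z₂ - z₁‖ ≥ 4S/π`) the triangle inequality suffices. Otherwise the segment `[z₁, z₂]` stays in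
`{‖z‖ ≥ S + 2S/π}`, where the Cauchy estimate on a disc of radius `2S/π` inside `{S ≤ ‖z‖}`
gives `‖g'‖ ≤ π M / (2 S ^ (1 + σ))`, and the mean value inequality concludes.
-/

open Metric

lemma sq_norm_sub_le_sq_norm_of_mem_segment {E : Type*} [NormedAddCommGroup E]
    [InnerProductSpace ℝ E] {x y w : E} {ρ : ℝ} (hρ : 0 ≤ ρ) (hx : ρ ≤ ‖x‖) (hy : ρ ≤ ‖y‖)
    (hw : w ∈ segment ℝ x y) : ρ ^ 2 - ‖y - x‖ ^ 2 / 4 ≤ ‖w‖ ^ 2 := by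
  obtain ⟨a, b, ha, hb, hab, rfl⟩ := hw
  have hexpand : ‖a • x + b • y‖ ^ 2 = a * ‖x‖ ^ 2 + b * ‖y‖ ^ 2 - a * b * ‖y - x‖ ^ 2 := by
    rw [norm_add_sq_real, norm_sub_sq_real, norm_smul, norm_smul, real_inner_smul_left,
      inner_smul_right, Real.norm_of_nonneg ha, Real.norm_of_nonneg hb, mul_pow, mul_pow,
      real_inner_comm]
    obtain rfl := eq_sub_of_add_eq hab
    ring
  have hab4 : a * b ≤ 1 / 4 := by nlinarith [sq_nonneg (a - b)]
  rw [hexpand]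
  nlinarith [pow_le_pow_left₀ hρ hx 2, pow_le_pow_left₀ hρ hy 2, sq_nonneg ‖y - x‖]

lemma norm_deriv_le_of_norm_le_on_exterior {g : ℂ → ℂ} {S B : ℝ}
    (hg : DifferentiableOn ℂ g {z | S ≤ ‖z‖}) (hB : ∀ z, S ≤ ‖z‖ → ‖g z‖ ≤ B)
    {w : ℂ} (hw : S < ‖w‖) : ‖deriv g w‖ ≤ B / (‖w‖ - S) := by
  have hball : closedBall w (‖w‖ - S) ⊆ {z | S ≤ ‖z‖} := fun z hz => by
    have := norm_sub_norm_le w z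
    rw [mem_closedBall, dist_eq_norm, norm_sub_rev] at hz
    exact show S ≤ ‖z‖ by linarith
  refine Complex.norm_deriv_le_of_forall_mem_sphere_norm_le (sub_pos.2 hw)
    ((hg.mono (closure_ball_subset_closedBall.trans hball)).diffContOnCl) fun z hz => ?_
  exact hB z (hball (sphere_subset_closedBall hz))

lemma norm_sub_le_of_norm_le_on_exterior {g : ℂ → ℂ} {S B r : ℝ} (hr : 0 < r)
    (hrS : r ≤ 2 * S / 3) (hg : DifferentiableOn ℂ g {z | S ≤ ‖z‖})
    (hB : ∀ z, S ≤ ‖z‖ → ‖g z‖ ≤ B) {z₁ z₂ : ℂ} (h₁ : 2 * S ≤ ‖z₁‖) (h₂ : 2 * S ≤ ‖z₂‖) :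
    ‖g z₂ - g z₁‖ ≤ B / r * ‖z₂ - z₁‖ := by
  have hB0 : 0 ≤ B := (norm_nonneg _).trans (hB z₁ (by linarith))
  rcases le_total (2 * r) ‖z₂ - z₁‖ with hfar | hnear
  · calc ‖g z₂ - g z₁‖ ≤ ‖g z₂‖ + ‖g z₁‖ := norm_sub_le _ _
      _ ≤ B + B := add_le_add (hB z₂ (by linarith)) (hB z₁ (by linarith))
      _ = B / r * (2 * r) := by field_simp; ring
      _ ≤ B / r * ‖z₂ - z₁‖ := by gcongr
  · -- On the segment `‖w‖² ≥ 4S² - r² ≥ (S + r)²`, so the Cauchy estimate applies with radius `r`.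
    have hseg : ∀ w ∈ segment ℝ z₁ z₂, S + r ≤ ‖w‖ := fun w hw => by
      have := sq_norm_sub_le_sq_norm_of_mem_segment (by linarith) h₁ h₂ hw
      nlinarith [norm_nonneg w, norm_nonneg (z₂ - z₁)]
    refine (convex_segment z₁ z₂).norm_image_sub_le_of_norm_deriv_le (fun w hw => ?_)
      (fun w hw => ?_) (left_mem_segment ℝ z₁ z₂) (right_mem_segment ℝ z₁ z₂)
    · exact hg.differentiableAt
        (continuous_norm.continuousAt.preimage_mem_nhds (Ici_mem_nhds (by linarith [hseg w hw])))
    · have hw' := hseg w hw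
      calc ‖deriv g w‖ ≤ B / (‖w‖ - S) :=
            norm_deriv_le_of_norm_le_on_exterior hg hB (by linarith)
        _ ≤ B / r := by gcongr; linarith

theorem key_lemma_general (S R σ M : ℝ) (τ : ℂ) (hRS : R < S) (hR : 0 < R)
    (hσ0 : 0 < σ) (hM : 0 < M) (f : ℂ → ℂ)
    (hf : DifferentiableOn ℂ f {z : ℂ | R < ‖z‖})
    (hbd : ∀ z : ℂ, R < ‖z‖ →
      ‖f z - (τ * z + 1)‖ ≤ M / ‖z‖ ^ σ) :
    ∀ z₁ z₂ : ℂ, z₁ ≠ z₂ → 2 * S ≤ ‖z₁‖ → 2 * S ≤ ‖z₂‖ →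
      ‖(f z₂ - f z₁) / (z₂ - z₁) - τ‖ ≤ Real.pi * M / 2 / S ^ (1 + σ) := by
  intro z₁ z₂ hne h₁ h₂
  have hS : 0 < S := hR.trans hRS
  set g : ℂ → ℂ := fun z => f z - (τ * z + 1)
  have hg : DifferentiableOn ℂ g {z | S ≤ ‖z‖} :=
    (hf.sub (by fun_prop)).mono fun z hz => hRS.trans_le hz
  have hB : ∀ z, S ≤ ‖z‖ → ‖g z‖ ≤ M / S ^ σ := fun z hz =>
    (hbd z (hRS.trans_le hz)).trans (by gcongr)
  have hr : 2 * S / Real.pi ≤ 2 * S / 3 := by gcongr; exact Real.pi_gt_three.le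
  have hlip := norm_sub_le_of_norm_le_on_exterior (by positivity) hr hg hB h₁ h₂
  have hsub : z₂ - z₁ ≠ 0 := sub_ne_zero.2 hne.symm
  have hquot : (f z₂ - f z₁) / (z₂ - z₁) - τ = (g z₂ - g z₁) / (z₂ - z₁) := by
    field_simp
    ring
  rw [hquot, norm_div, div_le_iff₀ (norm_pos_iff.2 hsub)]
  refine hlip.trans_eq (congrArg (· * _) ?_)
  rw [Real.rpow_add hS, Real.rpow_one]
  field_simp

theorem key_lemma (S R σ M : ℝ) (τ : ℂ) (hRS : R < S) (hR : 0 < R)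
    (hσ0 : 0 < σ) (hσ1 : σ ≤ 1) (hM : 0 < M) (f : ℂ → ℂ)
    (hf : DifferentiableOn ℂ f {z : ℂ | R < ‖z‖})
    (hbd : ∀ z : ℂ, R < ‖z‖ →
      ‖f z - (τ * z + 1)‖ ≤ M / ‖z‖ ^ σ) :
    ∀ z₁ z₂ : ℂ, z₁ ≠ z₂ → 2 * S ≤ ‖z₁‖ → 2 * S ≤ ‖z₂‖ →
      ‖(f z₂ - f z₁) / (z₂ - z₁) - τ‖ ≤ Real.pi * M / 2 / S ^ (1 + σ) :=
  key_lemma_general S R σ M τ hRS hR hσ0 hM f hf hbd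
end
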